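/- Let d and k be integers with 1 ≤ k and 2k ≤ d, and let P and Q be linear subspaces of Euclidean space ℝ^d with dim P = k and dim Q = d − k. Then there exists a linear isometry g of ℝ^d onto itself such that g(Q) = span{e_{k+1}, …, e_d} and the image of g(P) under the orthogonal projection onto span{e_{k+1}, …, e_d} is contained in span{e_{k+1}, …, e_{2k}}. -/

import Mathlib

open Module Submodule Set

noncomputable section

lemma mem_span_single_of {d : ℕ} {S : Set (Fin d)} {y : EuclideanSpace ℝ (Fin d)}
    (hy : ∀ i ∉ S, y i = 0) :
    y ∈ Submodule.span ℝ ((fun i : Fin d => EuclideanSpace.single i (1 : ℝ)) '' S) := by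
  have hrep : y = ∑ i : Fin d, y i • EuclideanSpace.single i (1 : ℝ) := by
    conv_lhs => rw [← (EuclideanSpace.basisFun (Fin d) ℝ).sum_repr y]
    simp
  rw [hrep]
  refine Submodule.sum_mem _ fun i _ => ?_
  by_cases hi : i ∈ S
  · exact Submodule.smul_mem _ _ (Submodule.subset_span ⟨i, hi, rfl⟩)
  · rw [hy i hi, zero_smul]; exact Submodule.zero_mem _

lemma apply_eq_zero_of_mem_span {d : ℕ} {S : Set (Fin d)} {y : EuclideanSpace ℝ (Fin d)}
    (hy : y ∈ Submodule.span ℝ ((fun i : Fin d => EuclideanSpace.single i (1 : ℝ)) '' S))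
    {i : Fin d} (hi : i ∉ S) : y i = 0 := by
  induction hy using Submodule.span_induction with
  | mem x hx =>
      obtain ⟨j, hj, rfl⟩ := hx
      have : i ≠ j := fun h => hi (h ▸ hj)
      simp [EuclideanSpace.single_apply, this]
  | zero => simp
  | add x z _ _ hx hz => rw [PiLp.add_apply, hx, hz, add_zero]
  | smul a x _ hx => rw [PiLp.smul_apply, hx, smul_zero]

set_option maxHeartbeats 1000000 in
/-- Given subspaces `P, Q ⊆ ℝ^d` with `dim P = k`, `dim Q = d − k`,
`1 ≤ k`, `2k ≤ d`, there is a linear isometry `g` of `ℝ^d` with `g(Q) = span{e_{k+1},…,e_d}`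
and the orthogonal projection of `g(P)` onto `span{e_{k+1},…,e_d}` contained in
`span{e_{k+1},…,e_{2k}}`. -/
theorem stmt12 (d k : ℕ) (hk : 1 ≤ k) (hkd : 2 * k ≤ d)
    (P Q : Submodule ℝ (EuclideanSpace ℝ (Fin d)))
    (hP : Module.finrank ℝ P = k) (hQ : Module.finrank ℝ Q = d - k) :
    ∃ g : EuclideanSpace ℝ (Fin d) ≃ₗᵢ[ℝ] EuclideanSpace ℝ (Fin d),
      Q.map (g.toLinearEquiv :
          EuclideanSpace ℝ (Fin d) →ₗ[ℝ] EuclideanSpace ℝ (Fin d)) =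
        Submodule.span ℝ
          ((fun i : Fin d => EuclideanSpace.single i (1 : ℝ)) '' {i | k ≤ (i : ℕ)}) ∧
      ∀ x ∈ P.map (g.toLinearEquiv :
          EuclideanSpace ℝ (Fin d) →ₗ[ℝ] EuclideanSpace ℝ (Fin d)),
        ((orthogonalProjection
            (Submodule.span ℝ
              ((fun i : Fin d => EuclideanSpace.single i (1 : ℝ)) '' {i | k ≤ (i : ℕ)})) x :
          EuclideanSpace ℝ (Fin d)) ∈
          Submodule.span ℝ
            ((fun i : Fin d => EuclideanSpace.single i (1 : ℝ)) ''
              {i | k ≤ (i : ℕ) ∧ (i : ℕ) < 2 * k})) := by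
  classical
  have hd : finrank ℝ (EuclideanSpace ℝ (Fin d)) = d := finrank_euclideanSpace_fin
  -- dimension facts
  have hPperp : finrank ℝ (Pᗮ : Submodule ℝ (EuclideanSpace ℝ (Fin d))) = d - k := by
    have := Submodule.finrank_add_finrank_orthogonal (K := P)
    rw [hP, hd] at this; omega
  have hQperp : finrank ℝ (Qᗮ : Submodule ℝ (EuclideanSpace ℝ (Fin d))) = k := by
    have := Submodule.finrank_add_finrank_orthogonal (K := Q)
    rw [hQ, hd] at this; omega
  have hM : d - 2 * k ≤ finrank ℝ (Q ⊓ Pᗮ : Submodule ℝ (EuclideanSpace ℝ (Fin d))) := by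
    have h1 := Submodule.finrank_sup_add_finrank_inf_eq Q Pᗮ
    have h2 : finrank ℝ ((Q ⊔ Pᗮ : Submodule ℝ (EuclideanSpace ℝ (Fin d)))) ≤
        finrank ℝ (EuclideanSpace ℝ (Fin d)) := Submodule.finrank_le _
    rw [hQ, hPperp] at h1
    omega
  set M : Submodule ℝ (EuclideanSpace ℝ (Fin d)) := Q ⊓ Pᗮ with hMdef
  set bM := stdOrthonormalBasis ℝ M with hbMdef
  set bO := stdOrthonormalBasis ℝ (Qᗮ : Submodule ℝ (EuclideanSpace ℝ (Fin d))) with hbOdef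
  set v : Fin d → EuclideanSpace ℝ (Fin d) := fun i =>
    if h : (i : ℕ) < k then (bO ⟨(i : ℕ), by omega⟩ : EuclideanSpace ℝ (Fin d))
    else if h2 : 2 * k ≤ (i : ℕ) then
      (bM ⟨(i : ℕ) - 2 * k, by have := i.isLt; omega⟩ : EuclideanSpace ℝ (Fin d))
    else 0 with hvdef
  set s : Set (Fin d) := {i | (i : ℕ) < k ∨ 2 * k ≤ (i : ℕ)} with hsdef
  have hv1 : ∀ i : Fin d, ∀ h : (i : ℕ) < k,
      v i = (bO ⟨(i : ℕ), by omega⟩ : EuclideanSpace ℝ (Fin d)) := by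
    intro i h; simp only [hvdef, dif_pos h]
  have hv2 : ∀ i : Fin d, ∀ h : 2 * k ≤ (i : ℕ),
      v i = (bM ⟨(i : ℕ) - 2 * k, by have := i.isLt; omega⟩ : EuclideanSpace ℝ (Fin d)) := by
    intro i h
    simp only [hvdef, dif_neg (by omega : ¬ (i : ℕ) < k), dif_pos h]
  have hMQ : ∀ a, ((bM a : EuclideanSpace ℝ (Fin d))) ∈ Q := fun a => ((bM a).2).1
  have hMP : ∀ a, ((bM a : EuclideanSpace ℝ (Fin d))) ∈ Pᗮ := fun a => ((bM a).2).2
  have hOQ : ∀ a, ((bO a : EuclideanSpace ℝ (Fin d))) ∈ Qᗮ := fun a => (bO a).2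
  have hon : Orthonormal ℝ (s.restrict v) := by
    constructor
    · rintro ⟨i, hi⟩
      rcases hi with hi | hi
      · change ‖v i‖ = 1; rw [hv1 i hi]
        exact bO.orthonormal.1 _
      · change ‖v i‖ = 1; rw [hv2 i hi]
        exact bM.orthonormal.1 _
    · rintro ⟨i, hi⟩ ⟨j, hj⟩ hne
      have hij : i ≠ j := fun h => hne (by simpa using h)
      change inner ℝ (v i) (v j) = 0
      rcases hi with hi | hi <;> rcases hj with hj | hj
      · rw [hv1 i hi, hv1 j hj, ← Submodule.coe_inner]
        exact bO.orthonormal.2 (fun h => hij (by simpa [Fin.ext_iff] using congrArg Fin.val h))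
      · rw [hv1 i hi, hv2 j hj]
        exact inner_left_of_mem_orthogonal (hMQ _) (hOQ _)
      · rw [hv2 i hi, hv1 j hj]
        exact inner_right_of_mem_orthogonal (hMQ _) (hOQ _)
      · rw [hv2 i hi, hv2 j hj, ← Submodule.coe_inner]
        refine bM.orthonormal.2 (fun h => hij ?_)
        have := congrArg Fin.val h
        simp only at this
        exact Fin.ext (by omega)
  obtain ⟨b, hb⟩ := hon.exists_orthonormalBasis_extension_of_card_eq (by simp [hd])
  have hb1 : ∀ i : Fin d, (i : ℕ) < k → b i ∈ Qᗮ := by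
    intro i hi
    rw [hb i (Or.inl hi), hv1 i hi]; exact hOQ _
  have hb2Q : ∀ i : Fin d, 2 * k ≤ (i : ℕ) → b i ∈ Q := by
    intro i hi
    rw [hb i (Or.inr hi), hv2 i hi]; exact hMQ _
  have hb2P : ∀ i : Fin d, 2 * k ≤ (i : ℕ) → b i ∈ Pᗮ := by
    intro i hi
    rw [hb i (Or.inr hi), hv2 i hi]; exact hMP _
  have hkd' : k ≤ d := by omega
  -- the span of the first k basis vectors is Qᗮ
  have hrange1 : Set.range (b ∘ (fun j : Fin k => (⟨(j : ℕ), by omega⟩ : Fin d)))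
      = b '' {i : Fin d | (i : ℕ) < k} := by
    ext x
    constructor
    · rintro ⟨j, rfl⟩
      exact ⟨⟨(j : ℕ), by omega⟩, j.isLt, rfl⟩
    · rintro ⟨i, hi, rfl⟩
      exact ⟨⟨(i : ℕ), hi⟩, congrArg b (Fin.ext rfl)⟩
  have hBrank : finrank ℝ (Submodule.span ℝ (b '' {i : Fin d | (i : ℕ) < k})) = k := by
    rw [← hrange1, finrank_span_eq_card (b.orthonormal.linearIndependent.comp _
      (fun a a' h => Fin.ext (by simpa [Fin.ext_iff] using h)))]
    simp
  have hB : Submodule.span ℝ (b '' {i : Fin d | (i : ℕ) < k}) = Qᗮ := by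
    apply Submodule.eq_of_le_of_finrank_eq
    · rw [Submodule.span_le]; rintro x ⟨i, hi, rfl⟩; exact hb1 i hi
    · rw [hBrank, hQperp]
  have hbQ : ∀ i : Fin d, k ≤ (i : ℕ) → b i ∈ Q := by
    intro i hi
    by_cases h2 : 2 * k ≤ (i : ℕ)
    · exact hb2Q i h2
    · rw [← Submodule.orthogonal_orthogonal Q, ← hB, Submodule.mem_orthogonal]
      intro u hu
      induction hu using Submodule.span_induction with
      | mem x hx =>
          obtain ⟨j, hj, rfl⟩ := hx
          have hj' : (j : ℕ) < k := hj
          exact b.orthonormal.2 (fun h => by rw [h] at hj'; omega)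
      | zero => simp
      | add x z _ _ hx hz => rw [inner_add_left, hx, hz, add_zero]
      | smul a x _ hx => rw [inner_smul_left, hx, mul_zero]
  have hrange2 : Set.range (b ∘ (fun j : Fin (d - k) =>
      (⟨k + (j : ℕ), by have := j.isLt; omega⟩ : Fin d)))
      = b '' {i : Fin d | k ≤ (i : ℕ)} := by
    ext x
    constructor
    · rintro ⟨j, rfl⟩
      exact ⟨⟨k + (j : ℕ), by have := j.isLt; omega⟩, by simp, rfl⟩
    · rintro ⟨i, hi, rfl⟩
      have hi' : k ≤ (i : ℕ) := hi
      refine ⟨⟨(i : ℕ) - k, by have := i.isLt; omega⟩, congrArg b (Fin.ext ?_)⟩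
      show k + ((i : ℕ) - k) = (i : ℕ)
      omega
  have hCrank : finrank ℝ (Submodule.span ℝ (b '' {i : Fin d | k ≤ (i : ℕ)})) = d - k := by
    rw [← hrange2, finrank_span_eq_card (b.orthonormal.linearIndependent.comp _
      (fun a a' h => Fin.ext (by simpa [Fin.ext_iff] using h)))]
    simp
  have hC : Submodule.span ℝ (b '' {i : Fin d | k ≤ (i : ℕ)}) = Q := by
    apply Submodule.eq_of_le_of_finrank_eq
    · rw [Submodule.span_le]; rintro x ⟨i, hi, rfl⟩; exact hbQ i hi
    · rw [hCrank, hQ]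
  refine ⟨b.repr, ?_, ?_⟩
  · rw [← hC, Submodule.map_span]
    congr 1
    rw [Set.image_image]
    apply Set.image_congr
    intro i _
    simp
  · intro x hx
    obtain ⟨y, hy, rfl⟩ := hx
    have hxy : ((b.repr.toLinearEquiv : EuclideanSpace ℝ (Fin d) →ₗ[ℝ]
        EuclideanSpace ℝ (Fin d)) y) = b.repr y := rfl
    rw [hxy]
    have hxco : ∀ i : Fin d, 2 * k ≤ (i : ℕ) → b.repr y i = 0 := by
      intro i hi
      rw [b.repr_apply_apply]
      exact inner_left_of_mem_orthogonal hy (hb2P i hi)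
    set w : EuclideanSpace ℝ (Fin d) :=
      WithLp.toLp 2 (fun i => if k ≤ (i : ℕ) then b.repr y i else 0 : ∀ _ : Fin d, ℝ) with hw
    have hwE : w ∈ Submodule.span ℝ
        ((fun i : Fin d => EuclideanSpace.single i (1 : ℝ)) '' {i | k ≤ (i : ℕ)}) := by
      refine mem_span_single_of fun i hi => ?_
      exact if_neg (by simpa using hi)
    have hwT : w ∈ Submodule.span ℝ
        ((fun i : Fin d => EuclideanSpace.single i (1 : ℝ)) ''
          {i | k ≤ (i : ℕ) ∧ (i : ℕ) < 2 * k}) := by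
      refine mem_span_single_of fun i hi => ?_
      by_cases h1 : k ≤ (i : ℕ)
      · have h2 : 2 * k ≤ (i : ℕ) := by
          simp only [Set.mem_setOf_eq, not_and, not_lt] at hi
          exact hi h1
        show (if k ≤ (i : ℕ) then b.repr y i else 0) = 0
        rw [if_pos h1, hxco i h2]
      · exact if_neg h1
    have huE : (b.repr y - w) ∈ (Submodule.span ℝ
        ((fun i : Fin d => EuclideanSpace.single i (1 : ℝ)) '' {i | k ≤ (i : ℕ)}))ᗮ := by
      rw [Submodule.mem_orthogonal]
      intro u hu
      have hu0 : ∀ i : Fin d, ¬ k ≤ (i : ℕ) → u i = 0 := fun i hi =>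
        apply_eq_zero_of_mem_span hu (by simpa using hi)
      rw [PiLp.inner_apply]
      refine Finset.sum_eq_zero fun i _ => ?_
      by_cases h1 : k ≤ (i : ℕ)
      · have hz : (b.repr y - w) i = 0 := by
          rw [PiLp.sub_apply]
          show b.repr y i - (if k ≤ (i : ℕ) then b.repr y i else 0) = 0
          rw [if_pos h1, sub_self]
        rw [hz, inner_zero_right]
      · rw [hu0 i h1, inner_zero_left]
    have hdecomp : b.repr y = w + (b.repr y - w) := by abel
    have hproj : ((orthogonalProjection (Submodule.span ℝ
        ((fun i : Fin d => EuclideanSpace.single i (1 : ℝ)) '' {i | k ≤ (i : ℕ)}))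
        (b.repr y)) : EuclideanSpace ℝ (Fin d)) = w := by
      conv_lhs => rw [hdecomp]
      rw [map_add, Submodule.orthogonalProjectionOnto_apply_of_mem_orthogonal huE,
        add_zero]
      exact Submodule.starProjection_eq_self_iff.mpr hwE
    rw [hproj]
    exact hwT
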